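/- If n is a positive integer and A is a set with {1, 3, ..., 2n-1} ⊆ A ⊆ {1, 2, ..., 2n} and |A| ≥ n + 4, then there exist five distinct integers b₁, ..., b₅ such that bᵢ + bⱼ ∈ A for all 1 ≤ i < j ≤ 5. -/

import Mathlib

open Finset

/-!
Pick four even elements `2p < 2q < 2r < 2s` of `A`. Three of them, `2a < 2b < 2c`, are the pairwise
sums of the "triangle" `a + b - c < a + c - b < b + c - a`, and a fourth, `2d`, is the sum of
`d - δ < d + δ` with `δ ∈ {1, 2}` chosen so that every sum of a triangle point with a pair point is
odd. These six odd sums lie in `A` as soon as they lie in `[1, 2n]`; this holds for the triangle on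
`p, q, r` with `d = r` unless `r` is large, and then it holds for the triangle on `q, r, s`
with `d = p`.
-/

lemma card_filter_odd_Icc_one_two_mul (n : ℕ) :
    #{x ∈ Icc (1 : ℤ) (2 * n) | Odd x} = n := by
  induction n with
  | zero => simp
  | succ m ih =>
    have hsplit : Icc (1 : ℤ) (2 * (m + 1 : ℕ))
        = insert (2 * (m : ℤ) + 2) (insert (2 * (m : ℤ) + 1) (Icc (1 : ℤ) (2 * m))) := by
      ext x
      simp only [mem_Icc, mem_insert]
      omega
    have hnotMem : (2 * m + 1 : ℤ) ∉ {x ∈ Icc (1 : ℤ) (2 * m) | Odd x} := by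
      simp only [mem_filter, mem_Icc, Int.odd_iff, not_and]
      omega
    rw [hsplit, filter_insert, filter_insert, if_neg (by simp only [Int.odd_iff]; omega),
      if_pos (by simp only [Int.odd_iff]; omega), card_insert_of_notMem hnotMem, ih]

lemma exists_lt_lt_lt_of_four_le_card {α : Type*} [LinearOrder α] {s : Finset α}
    (hs : 4 ≤ #s) : ∃ a ∈ s, ∃ b ∈ s, ∃ c ∈ s, ∃ d ∈ s, a < b ∧ b < c ∧ c < d := by
  obtain ⟨t, hts, ht⟩ := exists_subset_card_eq hs
  let f := t.orderEmbOfFin ht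
  have hf : ∀ i, f i ∈ s := fun i ↦ hts (t.orderEmbOfFin_mem ht i)
  exact ⟨f 0, hf 0, f 1, hf 1, f 2, hf 2, f 3, hf 3, f.strictMono (by decide),
    f.strictMono (by decide), f.strictMono (by decide)⟩

lemma four_le_card_filter_even {n : ℕ} {A : Finset ℤ}
    (hodd : {x ∈ Icc (1 : ℤ) (2 * n) | Odd x} ⊆ A) (hA : A ⊆ Icc 1 (2 * n))
    (hcard : n + 4 ≤ #A) : 4 ≤ #{x ∈ A | Even x} := by
  have hodd_eq : {x ∈ A | Odd x} = {x ∈ Icc (1 : ℤ) (2 * n) | Odd x} :=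
    Subset.antisymm (filter_subset_filter _ hA) fun x hx ↦
      mem_filter.mpr ⟨hodd hx, (mem_filter.mp hx).2⟩
  have hsplit := card_filter_add_card_filter_not (s := A) (p := Odd)
  simp only [Int.not_odd_iff_even, hodd_eq, card_filter_odd_Icc_one_two_mul] at hsplit
  omega

section

variable {A : Finset ℤ} {N : ℤ}

lemma exists_five_of_triangle_of_pair (hodd : {w ∈ Icc (1 : ℤ) N | Odd w} ⊆ A)
    {x y z u v : ℤ} (hxy : x < y) (hyz : y < z) (huv : u < v)
    (hxy_mem : x + y ∈ A) (hxz_mem : x + z ∈ A) (hyz_mem : y + z ∈ A) (huv_mem : u + v ∈ A)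
    (hy : Even (y - x)) (hz : Even (z - x)) (hv : Even (v - u)) (hxu : Odd (x + u))
    (hlo : 1 ≤ x + u) (hhi : z + v ≤ N) :
    ∃ b : Fin 5 → ℤ, Function.Injective b ∧ ∀ i j : Fin 5, i < j → b i + b j ∈ A := by
  rw [Int.even_iff] at hy hz hv
  rw [Int.odd_iff] at hxu
  have hcross : ∀ w, x + u ≤ w → w ≤ z + v → w % 2 = 1 → w ∈ A := fun w h₁ h₂ h₃ ↦
    hodd (mem_filter.mpr ⟨mem_Icc.mpr ⟨by omega, by omega⟩, Int.odd_iff.mpr h₃⟩)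
  refine ⟨![x, y, z, u, v], ?_, ?_⟩
  · intro i j hij
    fin_cases i <;> fin_cases j <;> simp at hij ⊢ <;> omega
  · intro i j hij
    fin_cases i <;> fin_cases j <;> simp at hij ⊢ <;>
      first
        | assumption
        | exact hcross _ (by omega) (by omega) (by omega)

lemma exists_five_of_doubles (hodd : {w ∈ Icc (1 : ℤ) N | Odd w} ⊆ A)
    {a b c d δ : ℤ} (hab : a < b) (hbc : b < c) (hδ : 0 < δ)
    (ha : 2 * a ∈ A) (hb : 2 * b ∈ A) (hc : 2 * c ∈ A) (hd : 2 * d ∈ A)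
    (hpar : Odd (a + b + c + d + δ)) (hlo : 1 ≤ a + b - c + d - δ) (hhi : b + c - a + d + δ ≤ N) :
    ∃ f : Fin 5 → ℤ, Function.Injective f ∧ ∀ i j : Fin 5, i < j → f i + f j ∈ A := by
  rw [Int.odd_iff] at hpar
  refine exists_five_of_triangle_of_pair hodd (x := a + b - c) (y := a + c - b) (z := b + c - a)
    (u := d - δ) (v := d + δ) (by omega) (by omega) (by omega)
    (by convert ha using 1; ring) (by convert hb using 1; ring) (by convert hc using 1; ring)
    (by convert hd using 1; ring)
    (Int.even_iff.mpr (by omega)) (Int.even_iff.mpr (by omega)) (Int.even_iff.mpr (by omega))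
    (Int.odd_iff.mpr (by omega)) (by omega) (by omega)

end

lemma exists_pos_le_two_odd_add (m : ℤ) : ∃ δ : ℤ, 0 < δ ∧ δ ≤ 2 ∧ Odd (m + δ) := by
  rcases Int.even_or_odd m with hm | hm
  · exact ⟨1, one_pos, one_le_two, hm.add_one⟩
  · exact ⟨2, two_pos, le_rfl, hm.add_even even_two⟩

theorem stmt_11_general (n : ℕ) (A : Finset ℤ)
    (hodd : (Finset.Icc (1 : ℤ) (2 * (n : ℤ))).filter (fun x => Odd x) ⊆ A)
    (hA : A ⊆ Finset.Icc 1 (2 * (n : ℤ))) (hcard : n + 4 ≤ A.card) :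
    ∃ b : Fin 5 → ℤ, Function.Injective b ∧
      ∀ i j : Fin 5, i < j → b i + b j ∈ A := by
  obtain ⟨_, hp, _, hq, _, hr, _, hs, hpq, hqr, hrs⟩ :=
    exists_lt_lt_lt_of_four_le_card (four_le_card_filter_even hodd hA hcard)
  obtain ⟨hpA, p, rfl⟩ := mem_filter.mp hp
  obtain ⟨hqA, q, rfl⟩ := mem_filter.mp hq
  obtain ⟨hrA, r, rfl⟩ := mem_filter.mp hr
  obtain ⟨hsA, s, rfl⟩ := mem_filter.mp hs
  have hp_pos := (mem_Icc.mp (hA hpA)).1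
  have hs_le := (mem_Icc.mp (hA hsA)).2
  simp only [← two_mul] at hpA hqA hrA hsA
  by_cases hr_small : q + 2 * r - p + 2 ≤ 2 * n
  · obtain ⟨δ, hδ, hδ2, hpar⟩ := exists_pos_le_two_odd_add (p + q + r + r)
    exact exists_five_of_doubles hodd (by omega) (by omega) hδ hpA hqA hrA hrA hpar
      (by omega) (by omega)
  · obtain ⟨δ, hδ, hδ2, hpar⟩ := exists_pos_le_two_odd_add (q + r + s + p)
    have hpar_mod := Int.odd_iff.mp hpar
    exact exists_five_of_doubles hodd (by omega) (by omega) hδ hqA hrA hsA hpA hpar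
      (by omega) (by omega)

theorem stmt_11 (n : ℕ) (hn : 1 ≤ n) (A : Finset ℤ)
    (hodd : (Finset.Icc (1 : ℤ) (2 * (n : ℤ))).filter (fun x => Odd x) ⊆ A)
    (hA : A ⊆ Finset.Icc 1 (2 * (n : ℤ))) (hcard : n + 4 ≤ A.card) :
    ∃ b : Fin 5 → ℤ, Function.Injective b ∧
      ∀ i j : Fin 5, i < j → b i + b j ∈ A :=
  stmt_11_general n A hodd hA hcard
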